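/- arXiv:1301.5723 — 2 statements merged into one kernel-verified Lean document; each statement's English description precedes it below -/
import Mathlib

section
/- Let α be a reduced word of ω with tower decomposition a_1 … a_k such that fin(a_i) > in(a_{i+1}) for all i. If for some i we have in(a_i) ≤ in(a_{i+1}), then fin(a_{i+1}) < fin(a_i). -/
/-- The adjacent transposition `sᵢ = (i, i+1)` as a permutation of `ℕ`. -/
def sGen (i : ℕ) : Equiv.Perm ℕ := Equiv.swap i (i + 1)

/-- The permutation represented by a word. -/
def toPerm (w : List ℕ) : Equiv.Perm ℕ := (w.map sGen).prod

/-- A word is reduced (of minimal length among words representing the same permutation). -/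
def IsReducedWord (w : List ℕ) : Prop := ∀ v : List ℕ, toPerm v = toPerm w → w.length ≤ v.length

/-- `w` is a reduced word for the permutation `ω`. -/
def IsReducedWordOf (w : List ℕ) (ω : Equiv.Perm ℕ) : Prop :=
  toPerm w = ω ∧ ∀ v : List ℕ, toPerm v = ω → w.length ≤ v.length

/-- The relation `<₁`: `β` is obtained from `α` by swapping two adjacent letters
`x, y` with `y ≥ x + 2` (the smaller letter moves right). -/
def Rel1 (α β : List ℕ) : Prop :=
  ∃ (p q : List ℕ) (x y : ℕ), x + 2 ≤ y ∧
    α = p ++ x :: y :: q ∧ β = p ++ y :: x :: q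

/-- Lexicographic order (non-strict) on words. -/
def LexLe (α β : List ℕ) : Prop := α = β ∨ List.Lex (· < ·) α β

/-- A tower word: a nonempty increasing run of consecutive integers. -/
def IsTowerWord (a : List ℕ) : Prop := a ≠ [] ∧ a.Chain' (fun x y => y = x + 1)

/-- First letter of a tower word. -/
def inn (a : List ℕ) : ℕ := a.headI

/-- Last letter of a tower word. -/
def fin' (a : List ℕ) : ℕ := a.getLastD 0

/-- `L` is the tower decomposition of `w`: a factorization into maximal tower words. -/
def IsTowerDecomp (w : List ℕ) (L : List (List ℕ)) : Prop :=
  L.flatten = w ∧ (∀ a ∈ L, IsTowerWord a) ∧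
    L.Chain' (fun a b => inn b ≠ fin' a + 1)

/-- The relation `<₂`: a directed long-braid move of a tower word past its left neighbour. -/
def Rel2 (α β : List ℕ) : Prop :=
  ∃ (A B : List (List ℕ)) (a b b1 b2 : List ℕ),
    IsTowerDecomp α (A ++ a :: b :: B) ∧
    inn a ≤ inn b ∧ inn b < fin' b ∧ fin' b < fin' a ∧
    IsTowerWord b1 ∧ (b2 = [] ∨ IsTowerWord b2) ∧ b1 ++ b2 = b ∧
    β = A.flatten ++ (b1.map (· + 1)) ++ a ++ b2 ++ B.flatten

/-- The directed-braid order: reflexive-transitive closure of `<₁ ∪ <₂`. -/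
def DBraid : List ℕ → List ℕ → Prop :=
  Relation.ReflTransGen (fun α β => Rel1 α β ∨ Rel2 α β)

/-- The natural word of `ω`: the reduced word whose tower decomposition has
strictly decreasing initial letters. -/
def IsNaturalWordOf (η : List ℕ) (ω : Equiv.Perm ℕ) : Prop :=
  IsReducedWordOf η ω ∧ ∃ L, IsTowerDecomp η L ∧ L.Chain' (fun a b => inn b < inn a)

/-- A natural basic word of `ω`: a reduced word whose tower decomposition satisfies
`fin(aᵢ) > in(aᵢ₊₁)` for all `i`. -/
def IsNaturalBasicOf (β : List ℕ) (ω : Equiv.Perm ℕ) : Prop :=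
  IsReducedWordOf β ω ∧ ∃ L, IsTowerDecomp β L ∧ L.Chain' (fun a b => inn b < fin' a)

/-- One step of the track of a letter `b` through a tower word `a`. -/
def trackStep (a : List ℕ) (b : ℕ) : Option ℕ :=
  if inn a < b ∧ b ≤ fin' a then some (b - 1)
  else if b + 2 ≤ inn a ∨ fin' a + 2 ≤ b then some b
  else none

/-- The track sequence of `b` through a list of tower words. -/
def trackSeq : ℕ → List (List ℕ) → List ℕ
  | b, [] => [b]
  | b, a :: rest =>
    match trackStep a b with
    | none => [b]
    | some b' => b :: trackSeq b' rest

/-- The tower decomposition of a word, as a function. -/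
def towerDecomp : List ℕ → List (List ℕ)
  | [] => []
  | x :: xs =>
    match towerDecomp xs with
    | [] => [[x]]
    | t :: ts => if t.headI = x + 1 then (x :: t) :: ts else [x] :: t :: ts

/-!
A tower word is a range `[p, …, q]`, and `sₚ ⋯ s_q` acts on `ℕ` as the cycle sending `q + 1` to `p`
and `k` to `k + 1` for `p ≤ k ≤ q`. If `a = [p, …, q]` and `b = [r, …, s]` with `p ≤ r ≤ q ≤ s`,
split `a = [p, …, r - 1] [r, …, q]`; the long braid relation
`[r, …, q] [r, …, s] = [r + 1, …, s] [r, …, q - 1]`, read off pointwise from that formula,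
shortens the word by two letters, against reducedness.
-/

lemma toPerm_append (u v : List ℕ) : toPerm (u ++ v) = toPerm u * toPerm v := by
  simp [toPerm]

lemma toPerm_range'_apply (s n k : ℕ) :
    toPerm (List.range' s n) k =
      if k = s + n then s else if s ≤ k ∧ k < s + n then k + 1 else k := by
  induction n generalizing s with
  | zero =>
    simp only [List.range'_zero, toPerm, List.map_nil, List.prod_nil, Equiv.Perm.one_apply]
    split_ifs <;> omega
  | succ n ih =>
    rw [List.range'_succ, ← List.singleton_append, toPerm_append, Equiv.Perm.mul_apply, ih]
    simp only [toPerm, List.map_cons, List.map_nil, List.prod_cons, List.prod_nil, mul_one,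
      sGen, Equiv.swap_apply_def]
    split_ifs <;> omega

lemma toPerm_range'_append_range' (r j t : ℕ) :
    toPerm (List.range' r (j + 1) ++ List.range' r (j + 1 + t)) =
      toPerm (List.range' (r + 1) (j + t) ++ List.range' r j) := by
  ext k
  simp only [toPerm_append, Equiv.Perm.mul_apply, toPerm_range'_apply]
  split_ifs <;> omega

lemma exists_toPerm_eq_range'_append_range' {p m r n : ℕ} (hpr : p ≤ r) (hrm : r < p + m)
    (hmn : p + m ≤ r + n) :
    ∃ c : List ℕ, toPerm c = toPerm (List.range' p m ++ List.range' r n) ∧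
      c.length + 2 = m + n := by
  obtain ⟨i, rfl⟩ : ∃ i, r = p + i := ⟨r - p, by omega⟩
  obtain ⟨j, rfl⟩ : ∃ j, m = i + (j + 1) := ⟨m - i - 1, by omega⟩
  obtain ⟨t, rfl⟩ : ∃ t, n = j + 1 + t := ⟨n - j - 1, by omega⟩
  refine ⟨List.range' p i ++ (List.range' (p + i + 1) (j + t) ++ List.range' (p + i) j), ?_, ?_⟩
  · rw [← List.range'_append_1 (s := p) (m := i), List.append_assoc, toPerm_append,
      toPerm_append (List.range' p i), toPerm_range'_append_range']
  · simp only [List.length_append, List.length_range']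
    omega

lemma inn_range' {s n : ℕ} (hn : 0 < n) : inn (List.range' s n) = s := by
  obtain ⟨n, rfl⟩ : ∃ n', n = n' + 1 := ⟨n - 1, by omega⟩
  simp [inn, List.range'_succ]

lemma fin'_range' {s n : ℕ} (hn : 0 < n) : fin' (List.range' s n) = s + n - 1 := by
  simp [fin', List.getLastD_eq_getLast?, List.getLast?_range', hn.ne']

lemma IsTowerWord.exists_eq_range' {a : List ℕ} (ha : IsTowerWord a) :
    ∃ s n, 0 < n ∧ a = List.range' s n := by
  obtain ⟨x, l, rfl⟩ := List.exists_cons_of_ne_nil ha.1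
  refine ⟨x, l.length + 1, Nat.succ_pos _, ?_⟩
  induction l generalizing x with
  | nil => rfl
  | cons y l ih =>
    obtain ⟨rfl, hl⟩ := List.isChain_cons_cons.mp ha.2
    rw [List.length_cons, List.range'_succ, ← ih (x + 1) ⟨List.cons_ne_nil _ _, hl⟩]

lemma IsReducedWordOf.length_le_of_toPerm_eq {u x v c : List ℕ} {ω : Equiv.Perm ℕ}
    (h : IsReducedWordOf (u ++ x ++ v) ω) (hc : toPerm c = toPerm x) :
    x.length ≤ c.length := by
  have := h.2 (u ++ c ++ v) (by rw [← h.1]; simp only [toPerm_append, hc])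
  simp only [List.length_append] at this
  omega

/-- if the tower decomposition of a reduced word satisfies
`fin(aᵢ) > in(aᵢ₊₁)` everywhere and `in(aᵢ) ≤ in(aᵢ₊₁)` at some boundary,
then `fin(aᵢ₊₁) < fin(aᵢ)` there. -/
theorem natural_basic_fin_lt (ω : Equiv.Perm ℕ) (α : List ℕ)
    (hα : IsReducedWordOf α ω) (L : List (List ℕ))
    (hd : IsTowerDecomp α L)
    (hnb : L.Chain' (fun a b => inn b < fin' a))
    (A B : List (List ℕ)) (a b : List ℕ)
    (hL : L = A ++ a :: b :: B) (h1 : inn a ≤ inn b) :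
    fin' b < fin' a := by
  by_contra! hfin
  have hlink : inn b < fin' a :=
    (List.isChain_pair (R := fun a b : List ℕ => inn b < fin' a)).mp
      (hnb.infix (l₁ := [a, b]) ⟨A, B, by simp [hL]⟩)
  have hα' : IsReducedWordOf (A.flatten ++ (a ++ b) ++ B.flatten) ω := by
    simpa [← hd.1, hL] using hα
  obtain ⟨p, m, hm, rfl⟩ := (hd.2.1 a (by simp [hL])).exists_eq_range'
  obtain ⟨r, n, hn, rfl⟩ := (hd.2.1 b (by simp [hL])).exists_eq_range'
  simp only [inn_range' hm, inn_range' hn, fin'_range' hm, fin'_range' hn] at h1 hlink hfin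
  obtain ⟨c, hc, hlen⟩ :=
    exists_toPerm_eq_range'_append_range' (m := m) (n := n) h1 (by omega) (by omega)
  have := hα'.length_le_of_toPerm_eq hc
  simp only [List.length_append, List.length_range'] at this
  omega
end

section
/- The natural word η_ω of a permutation ω is the lexicographically largest element of R(ω), the set of all reduced words of ω. -/
/-!
Write `η = i :: η'`. If a reduced word of `ω` starts with `j`, then `ω⁻¹ (j + 1) < ω⁻¹ j`,
since otherwise the exchange property would delete a letter of `s_j ω = toPerm α'`. On the other
hand the towers of `η` start at letters `≤ i`, and the inverse of a tower `[k, …]` maps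
`[k + 1, ∞)` increasingly into `[k, ∞)`, so `ω⁻¹` is increasing on `[i + 1, ∞)`. Hence no reduced word
of `ω` starts with a letter `> i`; a reduced word starting with `i` is compared with `η` through
its tail, a reduced word of `s_i ω`, whose natural word is `η'`.
-/

lemma toPerm_cons (u : ℕ) (w : List ℕ) : toPerm (u :: w) = sGen u * toPerm w := by
  simp [toPerm]

lemma sGen_mul_sGen_mul (u : ℕ) (σ : Equiv.Perm ℕ) : sGen u * (sGen u * σ) = σ :=
  Equiv.swap_mul_self_mul _ _ _

lemma sGen_apply (u x : ℕ) : sGen u x = if x = u then u + 1 else if x = u + 1 then u else x :=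
  Equiv.swap_apply_def u (u + 1) x

lemma sGen_strictMonoOn {u : ℕ} {S : Set ℕ} (hu : u ∉ S) : StrictMonoOn (sGen u) S := by
  intro x hx y hy hxy
  have : x ≠ u := fun h => hu (h ▸ hx)
  have : y ≠ u := fun h => hu (h ▸ hy)
  simp only [sGen_apply]
  split_ifs <;> omega

lemma sGen_mapsTo {m u : ℕ} (hmu : m ≤ u) :
    Set.MapsTo (sGen u) (Set.Ici m \ {u}) (Set.Ici m \ {u + 1}) := by
  intro x ⟨hxm, hxu⟩
  simp only [Set.mem_Ici, Set.mem_singleton_iff, Set.mem_sdiff, sGen_apply] at *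
  split_ifs <;> omega

/-- The exchange property: an inversion `(p, q)` of `(toPerm w)⁻¹` is removed by deleting a
letter of `w`. -/
lemma exists_toPerm_eq_swap_mul {p q : ℕ} (hpq : p < q) :
    ∀ w : List ℕ, (toPerm w)⁻¹ q < (toPerm w)⁻¹ p →
      ∃ v : List ℕ, toPerm v = Equiv.swap p q * toPerm w ∧ v.length + 1 = w.length
  | [], h => by simp [toPerm] at h; omega
  | u :: w, h => by
    rw [toPerm_cons, mul_inv_rev, Equiv.Perm.mul_apply, Equiv.Perm.mul_apply] at h
    by_cases hpair : p = u ∧ q = u + 1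
    · obtain ⟨rfl, rfl⟩ := hpair
      exact ⟨w, (sGen_mul_sGen_mul p _).symm.trans (toPerm_cons p w ▸ rfl), rfl⟩
    · have hlt : sGen u p < sGen u q := by
        simp only [sGen_apply]
        split_ifs <;> omega
      obtain ⟨v, hv, hlen⟩ := exists_toPerm_eq_swap_mul hlt w (by simpa [sGen] using h)
      refine ⟨u :: v, ?_, by simp [hlen]⟩
      rw [toPerm_cons, hv, toPerm_cons]
      simp only [sGen, Equiv.swap_apply_apply, Equiv.swap_inv, mul_assoc, Equiv.swap_mul_self_mul]

lemma IsReducedWordOf.tail {i : ℕ} {w : List ℕ} {ω : Equiv.Perm ℕ}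
    (h : IsReducedWordOf (i :: w) ω) : IsReducedWordOf w (sGen i * ω) := by
  obtain ⟨hω, hmin⟩ := h
  refine ⟨by rw [← hω, toPerm_cons, sGen_mul_sGen_mul], fun v hv => ?_⟩
  have := hmin (i :: v) (by rw [toPerm_cons, hv, sGen_mul_sGen_mul])
  simpa using this

lemma IsReducedWordOf.inv_apply_succ_lt {j : ℕ} {w : List ℕ} {ω : Equiv.Perm ℕ}
    (h : IsReducedWordOf (j :: w) ω) : ω⁻¹ (j + 1) < ω⁻¹ j := by
  have hσ : toPerm w = sGen j * ω := h.tail.1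
  by_contra! hle
  have hlt : (toPerm w)⁻¹ (j + 1) < (toPerm w)⁻¹ j := by
    have hne : ω⁻¹ j ≠ ω⁻¹ (j + 1) := by simp
    simp only [hσ, mul_inv_rev, Equiv.Perm.mul_apply, sGen, Equiv.swap_inv,
      Equiv.swap_apply_left, Equiv.swap_apply_right]
    omega
  obtain ⟨v, hv, hlen⟩ := exists_toPerm_eq_swap_mul (Nat.lt_succ_self j) w hlt
  have := h.2 v (by rw [hv, hσ]; exact sGen_mul_sGen_mul j ω)
  simp only [List.length_cons] at this
  omega

/-- `(toPerm [k, k + 1, …, l])⁻¹ = s_l ∘ ⋯ ∘ s_k`, and each `s_u` maps `[m, ∞) \ {u}` monotonically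
into `[m, ∞) \ {u + 1}`. -/
lemma strictMonoOn_inv_toPerm_of_isChain {m k : ℕ} {t : List ℕ} (hmk : m ≤ k)
    (hchain : (k :: t).IsChain (fun x y => y = x + 1)) :
    StrictMonoOn ⇑(toPerm (k :: t))⁻¹ (Set.Ici m \ {k}) ∧
      Set.MapsTo ⇑(toPerm (k :: t))⁻¹ (Set.Ici m \ {k}) (Set.Ici m) := by
  have hinv : ⇑(toPerm (k :: t))⁻¹ = ⇑(toPerm t)⁻¹ ∘ sGen k := by
    rw [toPerm_cons, mul_inv_rev, Equiv.Perm.coe_mul, sGen, Equiv.swap_inv]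
  suffices htail : StrictMonoOn ⇑(toPerm t)⁻¹ (Set.Ici m \ {k + 1}) ∧
      Set.MapsTo ⇑(toPerm t)⁻¹ (Set.Ici m \ {k + 1}) (Set.Ici m) by
    rw [hinv]
    exact ⟨htail.1.comp (sGen_strictMonoOn (by simp)) (sGen_mapsTo hmk),
      htail.2.comp (sGen_mapsTo hmk)⟩
  cases t with
  | nil => exact ⟨fun x _ y _ h => h, fun x hx => hx.1⟩
  | cons r t =>
    obtain ⟨rfl, hchain⟩ := List.isChain_cons_cons.mp hchain
    exact strictMonoOn_inv_toPerm_of_isChain (by omega) hchain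

lemma strictMonoOn_inv_toPerm_flatten :
    ∀ {L : List (List ℕ)} {m : ℕ}, (∀ a ∈ L, IsTowerWord a) →
      L.IsChain (fun a b => inn b < inn a) → (∀ a ∈ L.head?, inn a < m) →
      StrictMonoOn ⇑(toPerm L.flatten)⁻¹ (Set.Ici m)
  | [], _, _, _, _ => fun x _ y _ h => by simpa [toPerm] using h
  | a :: L, m, htower, hdec, hlt => by
    obtain ⟨hne, hchain⟩ := htower a List.mem_cons_self
    obtain ⟨k, t, rfl⟩ := List.exists_cons_of_ne_nil hne
    have hkm : k < m := hlt _ rfl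
    obtain ⟨hbelow, hdec⟩ := List.isChain_cons.mp hdec
    have hrest := strictMonoOn_inv_toPerm_flatten
      (fun b hb => htower b (List.mem_cons_of_mem _ hb)) hdec hbelow
    obtain ⟨hmono, hmaps⟩ := strictMonoOn_inv_toPerm_of_isChain le_rfl hchain
    have hsub : Set.Ici m ⊆ Set.Ici k \ {k} := by
      intro x hx
      simp only [Set.mem_Ici, Set.mem_sdiff, Set.mem_singleton_iff] at hx ⊢
      omega
    rw [List.flatten_cons, toPerm_append, mul_inv_rev, Equiv.Perm.coe_mul]
    exact (hrest.comp hmono hmaps).mono hsub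

lemma IsTowerDecomp.exists_eq_cons {i : ℕ} {w : List ℕ} {L : List (List ℕ)}
    (h : IsTowerDecomp (i :: w) L) : ∃ t L', L = (i :: t) :: L' := by
  obtain ⟨hflat, htower, -⟩ := h
  obtain _ | ⟨a, L'⟩ := L
  · simp at hflat
  obtain ⟨k, t, rfl⟩ := List.exists_cons_of_ne_nil (htower a List.mem_cons_self).1
  obtain ⟨rfl, -⟩ := List.cons_eq_cons.mp hflat
  exact ⟨t, L', rfl⟩

lemma IsNaturalWordOf.strictMonoOn_inv {i : ℕ} {η : List ℕ} {ω : Equiv.Perm ℕ}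
    (h : IsNaturalWordOf (i :: η) ω) : StrictMonoOn ⇑ω⁻¹ (Set.Ici (i + 1)) := by
  obtain ⟨⟨hω, -⟩, L, hL, hdec⟩ := h
  obtain ⟨t, L', rfl⟩ := hL.exists_eq_cons
  rw [← hω, ← hL.1]
  exact strictMonoOn_inv_toPerm_flatten hL.2.1 hdec fun a ha => by
    cases ha
    exact Nat.lt_succ_self i

lemma IsNaturalWordOf.tail {i : ℕ} {η : List ℕ} {ω : Equiv.Perm ℕ}
    (h : IsNaturalWordOf (i :: η) ω) : IsNaturalWordOf η (sGen i * ω) := by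
  obtain ⟨hred, L, hL, hdec⟩ := h
  refine ⟨hred.tail, ?_⟩
  obtain ⟨t, L', rfl⟩ := hL.exists_eq_cons
  obtain ⟨hflat, htower, hmax⟩ := hL
  obtain ⟨hbelow, hdec'⟩ := List.isChain_cons.mp hdec
  have hη : η = t ++ L'.flatten := by simpa using hflat.symm
  obtain _ | ⟨r, t⟩ := t
  · exact ⟨L', ⟨hη.symm, fun a ha => htower a (List.mem_cons_of_mem _ ha),
      (List.isChain_cons.mp hmax).2⟩, hdec'⟩
  obtain ⟨rfl, hchain⟩ := List.isChain_cons_cons.mp (htower _ List.mem_cons_self).2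
  have hfin : fin' ((i + 1) :: t) = fin' (i :: (i + 1) :: t) := by
    simp only [fin', List.getLastD_cons]
  refine ⟨((i + 1) :: t) :: L', ⟨hη.symm, ?_, ?_⟩, ?_⟩
  · rintro a (_ | ⟨_, ha⟩)
    · exact ⟨List.cons_ne_nil _ _, hchain⟩
    · exact htower a (List.mem_cons_of_mem _ ha)
  · refine List.isChain_cons.mpr ?_
    rw [hfin]
    exact List.isChain_cons.mp hmax
  · exact List.isChain_cons.mpr ⟨fun b hb => Nat.lt_succ_of_lt (hbelow b hb), hdec'⟩

/-- the natural word of ω is lexicographically largest in R(ω). -/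
theorem natural_word_lex_max (ω : Equiv.Perm ℕ) (η : List ℕ)
    (hη : IsNaturalWordOf η ω) :
    ∀ α : List ℕ, IsReducedWordOf α ω → LexLe α η := by
  induction η generalizing ω with
  | nil =>
    intro α hα
    exact .inl (List.eq_nil_of_length_eq_zero (Nat.le_zero.mp (hα.2 [] hη.1.1)))
  | cons i η ih =>
    rintro (_ | ⟨j, α⟩) hα
    · exact .inr .nil
    rcases lt_trichotomy j i with hji | rfl | hij
    · exact .inr (.rel hji)
    · rcases ih _ hη.tail α hα.tail with h | h
      · exact .inl (h ▸ rfl)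
      · exact .inr (.cons h)
    · have hdesc := hα.inv_apply_succ_lt
      have hmono := hη.strictMonoOn_inv (a := j) (b := j + 1)
        (Set.mem_Ici.2 hij) (Set.mem_Ici.2 (by omega)) (Nat.lt_succ_self j)
      exact absurd hdesc hmono.asymm
end
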